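/- arXiv:math/0612790 — 2 statements merged into one kernel-verified Lean document; each statement's English description precedes it below -/
import Mathlib

section
/- Let Ω ⊆ ℂ be a nonempty open connected set, let K be a complex Hilbert space, let θ : ℂ → ℂ be differentiable on Ω with θ(z₀) ≠ 0 for some z₀ ∈ Ω, let φ : ℂ → L(K) be differentiable on Ω, and let λ > 0 be such that ‖(φ(z))* x‖ ≤ λ · |θ(z)| · ‖x‖ for all z ∈ Ω and all x ∈ K. Then there exists a function F : ℂ → L(K), differentiable on Ω, with ‖F(z)‖ ≤ λ for all z ∈ Ω and φ(z) = θ(z) • F(z) for all z ∈ Ω. -/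
/-! An operator and its adjoint have the same norm, so `‖φ z‖ ≤ λ ‖θ z‖` on `Ω`. By the isolated
zeros principle, `θ` has no zeros in a punctured neighbourhood of any point of `Ω`, and there the
quotient `θ⁻¹ • φ` is holomorphic and bounded by `λ`. Riemann's removable singularity theorem then
makes its punctured limits `F z = lim_{w → z, w ≠ z} θ(w)⁻¹ • φ(w)` a holomorphic function on `Ω`,
still bounded by `λ`. At a zero of `θ` the bound forces `φ z = 0`, so `φ = θ • F` on all of `Ω`. -/

open Filter Function Set Topology

theorem ContinuousAt.limUnder_nhdsNE_eq {X Y : Type*} [TopologicalSpace X] [TopologicalSpace Y]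
    [T2Space Y] [Nonempty Y] {f : X → Y} {x : X} [(𝓝[≠] x).NeBot] (h : ContinuousAt f x) :
    limUnder (𝓝[≠] x) f = f x :=
  (h.tendsto.mono_left nhdsWithin_le_nhds).limUnder_eq

theorem ContinuousLinearMap.norm_le_of_norm_adjoint_apply_le {𝕜 E F : Type*} [RCLike 𝕜]
    [NormedAddCommGroup E] [InnerProductSpace 𝕜 E] [CompleteSpace E]
    [NormedAddCommGroup F] [InnerProductSpace 𝕜 F] [CompleteSpace F]
    {A : E →L[𝕜] F} {C : ℝ} (hC : 0 ≤ C) (h : ∀ y, ‖adjoint A y‖ ≤ C * ‖y‖) : ‖A‖ ≤ C :=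
  adjoint.norm_map A ▸ opNorm_le_bound _ hC h

theorem AnalyticOnNhd.eventually_nhdsNE_ne_zero {𝕜 E : Type*} [NontriviallyNormedField 𝕜]
    [NormedAddCommGroup E] [NormedSpace 𝕜 E] {f : 𝕜 → E} {U : Set 𝕜} {z₀ c : 𝕜}
    (hf : AnalyticOnNhd 𝕜 f U) (hU : IsPreconnected U) (hz₀ : z₀ ∈ U) (hfz₀ : f z₀ ≠ 0)
    (hc : c ∈ U) : ∀ᶠ z in 𝓝[≠] c, f z ≠ 0 :=
  not_frequently.mp fun h => hfz₀ (hf.eqOn_zero_of_preconnected_of_frequently_eq_zero hU hc h hz₀)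

namespace Complex

variable {E : Type*} [NormedAddCommGroup E] [NormedSpace ℂ E] [CompleteSpace E]
  {G : ℂ → E} {c : ℂ} {C : ℝ}

theorem differentiableAt_update_limUnder_of_eventually_norm_le
    (hG : ∀ᶠ z in 𝓝[≠] c, DifferentiableAt ℂ G z ∧ ‖G z‖ ≤ C) :
    DifferentiableAt ℂ (update G c (limUnder (𝓝[≠] c) G)) c := by
  set s := {z | z ≠ c → DifferentiableAt ℂ G z ∧ ‖G z‖ ≤ C}
  have hs : s ∈ 𝓝 c := eventually_nhdsWithin_iff.mp hG
  refine (differentiableOn_update_limUnder_of_bddAbove hs ?_ ?_).differentiableAt hs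
  · exact fun z hz => (hz.1 hz.2).1.differentiableWithinAt
  · exact ⟨C, forall_mem_image.mpr fun z hz => (hz.1 hz.2).2⟩

theorem norm_limUnder_nhdsNE_le (hG : ∀ᶠ z in 𝓝[≠] c, DifferentiableAt ℂ G z ∧ ‖G z‖ ≤ C) :
    ‖limUnder (𝓝[≠] c) G‖ ≤ C :=
  le_of_tendsto
    (continuousAt_update_same.mp
      (differentiableAt_update_limUnder_of_eventually_norm_le hG).continuousAt).norm
    (hG.mono fun _ hz => hz.2)

theorem differentiableAt_limUnder_nhdsNE
    (hG : ∀ᶠ z in 𝓝[≠] c, DifferentiableAt ℂ G z ∧ ‖G z‖ ≤ C) :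
    DifferentiableAt ℂ (fun z => limUnder (𝓝[≠] z) G) c := by
  refine (differentiableAt_update_limUnder_of_eventually_norm_le hG).congr_of_eventuallyEq ?_
  filter_upwards [eventually_nhdsWithin_iff.mp hG] with z hz
  rcases eq_or_ne z c with rfl | hzc
  · rw [update_self]
  · rw [update_of_ne hzc, (hz hzc).1.continuousAt.limUnder_nhdsNE_eq]

theorem exists_differentiableOn_eq_smul_of_norm_le {Ω : Set ℂ} (hΩo : IsOpen Ω)
    (hΩ : IsPreconnected Ω) {g : ℂ → ℂ} (hg : DifferentiableOn ℂ g Ω) {z₀ : ℂ} (hz₀ : z₀ ∈ Ω)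
    (hgz₀ : g z₀ ≠ 0) {f : ℂ → E} (hf : DifferentiableOn ℂ f Ω) {C : ℝ}
    (hfg : ∀ z ∈ Ω, ‖f z‖ ≤ C * ‖g z‖) :
    ∃ F : ℂ → E, DifferentiableOn ℂ F Ω ∧ (∀ z ∈ Ω, ‖F z‖ ≤ C) ∧ ∀ z ∈ Ω, f z = g z • F z := by
  set G := fun z => (g z)⁻¹ • f z
  have hGdiff : ∀ z ∈ Ω, g z ≠ 0 → DifferentiableAt ℂ G z := fun z hz hgz =>
    ((hg.differentiableAt (hΩo.mem_nhds hz)).inv hgz).smul (hf.differentiableAt (hΩo.mem_nhds hz))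
  have hG : ∀ c ∈ Ω, ∀ᶠ z in 𝓝[≠] c, DifferentiableAt ℂ G z ∧ ‖G z‖ ≤ C := by
    intro c hc
    filter_upwards [(hg.analyticOnNhd hΩo).eventually_nhdsNE_ne_zero hΩ hz₀ hgz₀ hc,
      mem_nhdsWithin_of_mem_nhds (hΩo.mem_nhds hc)] with z hgz hz
    refine ⟨hGdiff z hz hgz, ?_⟩
    rw [norm_smul, norm_inv, inv_mul_le_iff₀ (norm_pos_iff.mpr hgz), mul_comm]
    exact hfg z hz
  refine ⟨fun z => limUnder (𝓝[≠] z) G, fun c hc => ?_, fun c hc => norm_limUnder_nhdsNE_le (hG c hc),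
    fun c hc => ?_⟩
  · exact (differentiableAt_limUnder_nhdsNE (hG c hc)).differentiableWithinAt
  by_cases hgc : g c = 0
  · have : ‖f c‖ ≤ 0 := by simpa [hgc] using hfg c hc
    simp [norm_le_zero_iff.mp this, hgc]
  · change f c = g c • limUnder (𝓝[≠] c) G
    rw [(hGdiff c hc hgc).continuousAt.limUnder_nhdsNE_eq, smul_inv_smul₀ hgc]

end Complex

/-- If `‖(φ z)* x‖ ≤ λ |θ z| ‖x‖` on a nonempty open connected `Ω` with `θ` analytic and
not identically zero, and `φ` analytic, then `θ` divides `φ`: `φ = θ • F` for some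
analytic `F` bounded by `λ` on `Ω`. -/
theorem divides_of_adjoint_norm_le
    (Ω : Set ℂ) (hΩo : IsOpen Ω) (hΩc : IsConnected Ω)
    {K : Type*} [NormedAddCommGroup K] [InnerProductSpace ℂ K] [CompleteSpace K]
    (θ : ℂ → ℂ) (hθ : DifferentiableOn ℂ θ Ω)
    (z₀ : ℂ) (hz₀ : z₀ ∈ Ω) (hθz₀ : θ z₀ ≠ 0)
    (φ : ℂ → (K →L[ℂ] K)) (hφ : DifferentiableOn ℂ φ Ω)
    (lam : ℝ) (hlam : 0 < lam)
    (hineq : ∀ z ∈ Ω, ∀ x : K,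
      ‖ContinuousLinearMap.adjoint (φ z) x‖ ≤ lam * ‖θ z‖ * ‖x‖) :
    ∃ F : ℂ → (K →L[ℂ] K), DifferentiableOn ℂ F Ω ∧ (∀ z ∈ Ω, ‖F z‖ ≤ lam) ∧
      ∀ z ∈ Ω, φ z = θ z • F z :=
  Complex.exists_differentiableOn_eq_smul_of_norm_le hΩo hΩc.isPreconnected hθ hz₀ hθz₀ hφ
    fun z hz => ContinuousLinearMap.norm_le_of_norm_adjoint_apply_le (by positivity) (hineq z hz)
end

section
/- Let Ω ⊆ ℂ be a nonempty open connected set, let n ≥ 1, let θ : ℂ → ℂ be differentiable on Ω with θ(z₀) ≠ 0 for some z₀ ∈ Ω, let φ : ℂ → L(ℂⁿ) (continuous linear operators on EuclideanSpace ℂ (Fin n)) be differentiable on Ω, and let λ > 0 be such that |θ(z)| · ‖x‖ ≤ λ · ‖(φ(z))* x‖ for all z ∈ Ω and all x ∈ ℂⁿ. Then there exists ψ : ℂ → L(ℂⁿ), differentiable on Ω, with ‖ψ(z)‖ ≤ λ for all z ∈ Ω, such that φ(z) ∘ ψ(z) = θ(z) • id and ψ(z) ∘ φ(z) = θ(z)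 • id for all z ∈ Ω. -/
/-!
Wherever `θ z ≠ 0`, the hypothesis bounds `(φ z)*` below by `‖θ z‖ / λ`; in finite dimension this
makes `φ z` invertible, and since taking adjoints preserves norms, `‖θ z • (φ z)⁻¹‖ ≤ λ`. So
`θ φ⁻¹` is holomorphic and bounded by `λ` off the zeros of `θ`, which are isolated because `θ` does
not vanish identically on the connected set `Ω`. Riemann's removable singularity theorem extends
it across these zeros, and the bound and the identities `φψ = θ = ψφ` pass to the limit.
-/

open Topology Filter

namespace ContinuousLinearMap

variable {𝕜 E : Type*}

section Normed

variable [NontriviallyNormedField 𝕜] [NormedAddCommGroup E] [NormedSpace 𝕜 E] {A : E →L[𝕜] E}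
  {a b : ℝ}

theorem isUnit_of_mul_norm_le_mul_norm_apply [CompleteSpace 𝕜] [FiniteDimensional 𝕜 E] (ha : 0 < a)
    (h : ∀ x, a * ‖x‖ ≤ b * ‖A x‖) : IsUnit A := by
  have := FiniteDimensional.complete 𝕜 E
  have hinj : Function.Injective A := by
    refine (injective_iff_map_eq_zero A).2 fun x hx => norm_le_zero_iff.1 ?_
    have := h x
    rw [hx, norm_zero, mul_zero] at this
    exact nonpos_of_mul_nonpos_right this ha
  exact isUnit_iff_bijective.2 ⟨hinj, LinearMap.injective_iff_surjective.1 hinj⟩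

theorem mul_norm_ringInverse_le (hA : IsUnit A) (ha : 0 < a) (hb : 0 ≤ b)
    (h : ∀ x, a * ‖x‖ ≤ b * ‖A x‖) : a * ‖Ring.inverse A‖ ≤ b := by
  rw [← le_div_iff₀' ha]
  refine opNorm_le_bound _ (div_nonneg hb ha.le) fun y => ?_
  have hy : A (Ring.inverse A y) = y := congr($(Ring.mul_inverse_cancel A hA) y)
  rw [div_mul_eq_mul_div, le_div_iff₀' ha]
  simpa only [hy] using h (Ring.inverse A y)

end Normed

variable [RCLike 𝕜] [NormedAddCommGroup E] [InnerProductSpace 𝕜 E] [CompleteSpace E]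
  [FiniteDimensional 𝕜 E] {A : E →L[𝕜] E} {a b : ℝ}

theorem isUnit_and_mul_norm_ringInverse_le_of_adjoint (ha : 0 < a) (hb : 0 ≤ b)
    (h : ∀ x, a * ‖x‖ ≤ b * ‖adjoint A x‖) : IsUnit A ∧ a * ‖Ring.inverse A‖ ≤ b := by
  rw [← star_eq_adjoint] at h
  have hA := isUnit_of_mul_norm_le_mul_norm_apply ha h
  refine ⟨isUnit_star.1 hA, ?_⟩
  simpa only [Ring.inverse_star, norm_star] using mul_norm_ringInverse_le hA ha hb h

end ContinuousLinearMap

theorem AnalyticOnNhd.eventually_nhdsNE_mem_and_ne_zero {𝕜 E : Type*} [NontriviallyNormedField 𝕜]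
    [NormedAddCommGroup E] [NormedSpace 𝕜 E] {f : 𝕜 → E} {U : Set 𝕜} {z₀ : 𝕜}
    (hf : AnalyticOnNhd 𝕜 f U) (hUo : IsOpen U) (hU : IsPreconnected U) (hz₀ : z₀ ∈ U)
    (hfz₀ : f z₀ ≠ 0) {z : 𝕜} (hz : z ∈ U) : ∀ᶠ w in 𝓝[≠] z, w ∈ U ∧ f w ≠ 0 := by
  rcases (hf z hz).eventually_eq_zero_or_eventually_ne_zero with h | h
  · exact absurd (hf.eqOn_zero_of_preconnected_of_eventuallyEq_zero hU hz h hz₀) hfz₀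
  · exact (eventually_nhdsWithin_of_eventually_nhds (hUo.eventually_mem hz)).and h

theorem ContinuousAt.eq_of_eventuallyEq_nhdsNE {X Y : Type*} [TopologicalSpace X]
    [TopologicalSpace Y] [T2Space Y] {x : X} [(𝓝[≠] x).NeBot] {f g : X → Y}
    (hf : ContinuousAt f x) (hg : ContinuousAt g x) (h : f =ᶠ[𝓝[≠] x] g) : f x = g x :=
  ((hf.eventuallyEq_nhds_iff_eventuallyEq_nhdsNE hg).1 h).eq_of_nhds

noncomputable def puncturedLimit {X E : Type*} [TopologicalSpace X] [TopologicalSpace E]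
    [Nonempty E] (f : X → E) (z : X) : E :=
  limUnder (𝓝[≠] z) f

theorem ContinuousAt.puncturedLimit_eq {X E : Type*} [TopologicalSpace X] [TopologicalSpace E]
    [T2Space E] [Nonempty E] {f : X → E} {x : X} [(𝓝[≠] x).NeBot] (hf : ContinuousAt f x) :
    puncturedLimit f x = f x :=
  (hf.tendsto.mono_left nhdsWithin_le_nhds).limUnder_eq

namespace Complex

variable {E : Type*} [NormedAddCommGroup E] [NormedSpace ℂ E] {f : ℂ → E} {c : ℂ}

theorem eventuallyEq_puncturedLimit (hd : ∀ᶠ w in 𝓝[≠] c, DifferentiableAt ℂ f w) :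
    puncturedLimit f =ᶠ[𝓝[≠] c] f :=
  hd.mono fun _ hw => hw.continuousAt.puncturedLimit_eq

theorem differentiableAt_puncturedLimit [CompleteSpace E]
    (hd : ∀ᶠ w in 𝓝[≠] c, DifferentiableAt ℂ f w)
    (hb : IsBoundedUnder (· ≤ ·) (𝓝[≠] c) (‖f ·‖)) :
    DifferentiableAt ℂ (puncturedLimit f) c := by
  obtain ⟨C, hC⟩ := hb
  obtain ⟨t, ht, hts⟩ := mem_nhdsWithin_iff_exists_mem_nhds_inter.1 (hd.and hC)
  have hupd := differentiableOn_update_limUnder_of_bddAbove ht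
    (fun w hw => (hts hw).1.differentiableWithinAt)
    ⟨C, Set.forall_mem_image.2 fun w hw => (hts hw).2⟩
  refine (hupd.differentiableAt ht).congr_of_eventuallyEq ?_
  refine eventuallyEq_nhds_of_eventuallyEq_nhdsNE ?_ (Function.update_self c _ f).symm
  filter_upwards [eventuallyEq_puncturedLimit hd, self_mem_nhdsWithin] with w hw hwc
  rw [Function.update_of_ne hwc, hw]

theorem puncturedLimit_smul_ringInverse_spec {A : Type*} [NormedRing A] [NormedAlgebra ℂ A]
    [CompleteSpace A] {θ : ℂ → ℂ} {φ : ℂ → A} {M : ℝ}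
    (hd : ∀ᶠ w in 𝓝 c, DifferentiableAt ℂ θ w ∧ DifferentiableAt ℂ φ w)
    (hu : ∀ᶠ w in 𝓝[≠] c, IsUnit (φ w) ∧ ‖θ w • Ring.inverse (φ w)‖ ≤ M) :
    let ψ := puncturedLimit fun w => θ w • Ring.inverse (φ w)
    DifferentiableAt ℂ ψ c ∧ ‖ψ c‖ ≤ M ∧ φ c * ψ c = θ c • 1 ∧ ψ c * φ c = θ c • 1 := by
  intro ψ
  have hgd : ∀ᶠ w in 𝓝[≠] c, DifferentiableAt ℂ (fun w => θ w • Ring.inverse (φ w)) w :=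
    (eventually_nhdsWithin_of_eventually_nhds hd).and hu |>.mono
      fun _ ⟨⟨hθw, hφw⟩, hφu, _⟩ => hθw.smul (hφw.inverse hφu)
  have hψ : DifferentiableAt ℂ ψ c :=
    differentiableAt_puncturedLimit hgd ⟨M, hu.mono fun _ h => h.2⟩
  have hψu : ∀ᶠ w in 𝓝[≠] c, IsUnit (φ w) ∧ ‖ψ w‖ ≤ M ∧ ψ w = θ w • Ring.inverse (φ w) := by
    filter_upwards [eventuallyEq_puncturedLimit hgd, hu] with w hw hwu
    exact ⟨hwu.1, (congrArg norm hw).trans_le hwu.2, hw⟩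
  have hθφ := hd.self_of_nhds
  have hθ1 : ContinuousAt (fun w => θ w • (1 : A)) c := hθφ.1.continuousAt.smul continuousAt_const
  refine ⟨hψ, ?_, ?_, ?_⟩
  · exact le_of_tendsto (hψ.continuousAt.norm.tendsto.mono_left nhdsWithin_le_nhds)
      (hψu.mono fun _ h => h.2.1)
  · refine (hθφ.2.continuousAt.mul hψ.continuousAt).eq_of_eventuallyEq_nhdsNE hθ1 ?_
    filter_upwards [hψu] with w hw
    rw [Pi.mul_apply, hw.2.2, mul_smul_comm, Ring.mul_inverse_cancel _ hw.1]
  · refine (hψ.continuousAt.mul hθφ.2.continuousAt).eq_of_eventuallyEq_nhdsNE hθ1 ?_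
    filter_upwards [hψu] with w hw
    rw [Pi.mul_apply, hw.2.2, smul_mul_assoc, Ring.inverse_mul_cancel _ hw.1]

end Complex

theorem divides_scalar_of_abs_le_adjoint_general
    (Ω : Set ℂ) (hΩo : IsOpen Ω) (hΩc : IsConnected Ω)
    (n : ℕ)
    (θ : ℂ → ℂ) (hθ : DifferentiableOn ℂ θ Ω)
    (z₀ : ℂ) (hz₀ : z₀ ∈ Ω) (hθz₀ : θ z₀ ≠ 0)
    (φ : ℂ → (EuclideanSpace ℂ (Fin n) →L[ℂ] EuclideanSpace ℂ (Fin n)))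
    (hφ : DifferentiableOn ℂ φ Ω)
    (lam : ℝ) (hlam : 0 < lam)
    (hineq : ∀ z ∈ Ω, ∀ x : EuclideanSpace ℂ (Fin n),
      ‖θ z‖ * ‖x‖ ≤ lam * ‖ContinuousLinearMap.adjoint (φ z) x‖) :
    ∃ ψ : ℂ → (EuclideanSpace ℂ (Fin n) →L[ℂ] EuclideanSpace ℂ (Fin n)),
      DifferentiableOn ℂ ψ Ω ∧ (∀ z ∈ Ω, ‖ψ z‖ ≤ lam) ∧
      (∀ z ∈ Ω, (φ z).comp (ψ z) = θ z • ContinuousLinearMap.id ℂ (EuclideanSpace ℂ (Fin n))) ∧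
      (∀ z ∈ Ω, (ψ z).comp (φ z) = θ z • ContinuousLinearMap.id ℂ (EuclideanSpace ℂ (Fin n))) := by
  have hunit : ∀ z ∈ Ω, θ z ≠ 0 → IsUnit (φ z) ∧ ‖θ z • Ring.inverse (φ z)‖ ≤ lam :=
    fun z hz hθz => by
      rw [norm_smul]
      exact ContinuousLinearMap.isUnit_and_mul_norm_ringInverse_le_of_adjoint
        (norm_pos_iff.2 hθz) hlam.le (hineq z hz)
  have hdiff : ∀ z ∈ Ω, ∀ᶠ w in 𝓝 z, DifferentiableAt ℂ θ w ∧ DifferentiableAt ℂ φ w :=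
    fun z hz => (hΩo.eventually_mem hz).mono fun w hw =>
      ⟨hθ.differentiableAt (hΩo.mem_nhds hw), hφ.differentiableAt (hΩo.mem_nhds hw)⟩
  have hspec z (hz : z ∈ Ω) := Complex.puncturedLimit_smul_ringInverse_spec (hdiff z hz)
    ((hθ.analyticOnNhd hΩo).eventually_nhdsNE_mem_and_ne_zero hΩo hΩc.isPreconnected hz₀ hθz₀ hz
      |>.mono fun w ⟨hw, hθw⟩ => hunit w hw hθw)
  exact ⟨_, fun z hz => (hspec z hz).1.differentiableWithinAt, fun z hz => (hspec z hz).2.1,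
    fun z hz => (hspec z hz).2.2.1, fun z hz => (hspec z hz).2.2.2⟩

/-- If `|θ z| ‖x‖ ≤ λ ‖(φ z)* x‖` on a nonempty open connected `Ω`, `θ` analytic and not
identically zero, `φ : Ω → L(ℂⁿ)` analytic, then `φ` divides `θ`: there is an analytic
`ψ` bounded by `λ` with `φψ = θ • id = ψφ` on `Ω`. -/
theorem divides_scalar_of_abs_le_adjoint
    (Ω : Set ℂ) (hΩo : IsOpen Ω) (hΩc : IsConnected Ω)
    (n : ℕ) (hn : 1 ≤ n)
    (θ : ℂ → ℂ) (hθ : DifferentiableOn ℂ θ Ω)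
    (z₀ : ℂ) (hz₀ : z₀ ∈ Ω) (hθz₀ : θ z₀ ≠ 0)
    (φ : ℂ → (EuclideanSpace ℂ (Fin n) →L[ℂ] EuclideanSpace ℂ (Fin n)))
    (hφ : DifferentiableOn ℂ φ Ω)
    (lam : ℝ) (hlam : 0 < lam)
    (hineq : ∀ z ∈ Ω, ∀ x : EuclideanSpace ℂ (Fin n),
      ‖θ z‖ * ‖x‖ ≤ lam * ‖ContinuousLinearMap.adjoint (φ z) x‖) :
    ∃ ψ : ℂ → (EuclideanSpace ℂ (Fin n) →L[ℂ] EuclideanSpace ℂ (Fin n)),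
      DifferentiableOn ℂ ψ Ω ∧ (∀ z ∈ Ω, ‖ψ z‖ ≤ lam) ∧
      (∀ z ∈ Ω, (φ z).comp (ψ z) = θ z • ContinuousLinearMap.id ℂ (EuclideanSpace ℂ (Fin n))) ∧
      (∀ z ∈ Ω, (ψ z).comp (φ z) = θ z • ContinuousLinearMap.id ℂ (EuclideanSpace ℂ (Fin n))) :=
  divides_scalar_of_abs_le_adjoint_general Ω hΩo hΩc n θ hθ z₀ hz₀ hθz₀ φ hφ lam hlam hineq
end
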